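/- The coefficient of ζ³ in the branch of F_a fixing ζ = 0 equals ((a−7)/(3(a−1)))², the square of the coefficient of ζ². -/

import Mathlib

/-!
By Faà di Bruno, the `ζ³` coefficient of `j ∘ ω` is `(j''' ω'³ + 3 j'' ω'' ω' + j' ω''') / 6` at `0`,
where `ω 0 = 0`. Writing `b = 2 / (a - 1)`, the Möbius map `j w = -w / (1 - b w) = -∑ b^(k-1) w^k`
has `j⁽ᵏ⁾ 0 = -k! b^(k-1)`, while `ω = -ζ - ζ²/3 - ζ³/9 + O(ζ⁴)` follows from the derivatives of
`u ↦ u^(1/2)` at `1` by Faà di Bruno once more. The coefficient is then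
`1/9 - 2b/3 + b² = (1/3 - b)²`, and `1/3 - b` is the `ζ²` coefficient `(a - 7) / (3 (a - 1))`.
-/

open Complex Filter Topology Nat

theorem iteratedDeriv_cpow_const (r : ℂ) (k : ℕ) {z : ℂ} (hz : z ∈ slitPlane) :
    iteratedDeriv k (· ^ r) z = (∏ i ∈ Finset.range k, (r - i)) * z ^ (r - k) := by
  induction k generalizing z with
  | zero => simp
  | succ k ih =>
    have hloc : iteratedDeriv k (· ^ r) =ᶠ[𝓝 z]
        fun w => (∏ i ∈ Finset.range k, (r - i)) * w ^ (r - k) :=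
      eventually_of_mem (isOpen_slitPlane.mem_nhds hz) fun w hw => ih hw
    rw [iteratedDeriv_succ, hloc.deriv_eq, deriv_const_mul_field, Complex.deriv_cpow_const hz,
      Finset.prod_range_succ]
    push_cast
    ring_nf

theorem iteratedDeriv_neg_div_one_sub_mul {𝕜 : Type*} [NontriviallyNormedField 𝕜] (b : 𝕜)
    {k : ℕ} (hk : 0 < k) :
    iteratedDeriv k (fun w => -w / (1 - b * w)) 0 = -(k ! : 𝕜) * b ^ (k - 1) := by
  have hinv (m : ℕ) : iteratedDeriv m (fun w => (-b * w + 1)⁻¹) 0 = m ! * b ^ m := by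
    have hsign : (-1 : 𝕜) ^ m * (-1) ^ m = 1 := by rw [← mul_pow]; norm_num
    rw [iteratedDeriv_eq_iterate, iter_deriv_inv_linear]
    simp only [mul_zero, zero_add, one_zpow, mul_one, neg_pow b]
    linear_combination (m ! * b ^ m : 𝕜) * hsign
  have hmul : (fun w => -w / (1 - b * w)) = (fun w : 𝕜 => -w) * fun w => (-b * w + 1)⁻¹ := by
    ext w
    simp only [Pi.mul_apply, div_eq_mul_inv]
    ring_nf
  -- In the Leibniz expansion only the term differentiating `-w` exactly once survives.
  rw [hmul, iteratedDeriv_mul (by fun_prop) (by fun_prop (disch := simp)),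
    Finset.sum_eq_single 1]
  · rw [hinv, iteratedDeriv_fun_neg, iteratedDeriv_fun_id_zero, if_pos rfl,
      Nat.choose_one_right, ← Nat.mul_factorial_pred hk.ne']
    push_cast
    ring
  · intro i _ hi
    rw [iteratedDeriv_fun_neg, iteratedDeriv_fun_id_zero, if_neg hi]
    simp
  · simp [hk.ne']

noncomputable def radicand (ζ : ℂ) : ℂ := 1 - 2 * ζ / 3 - ζ ^ 2 / 3

theorem radicand_zero : radicand 0 = 1 := by simp [radicand]

theorem hasDerivAt_radicand (ζ : ℂ) : HasDerivAt radicand (-(2 / 3) - 2 * ζ / 3) ζ :=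
  (((hasDerivAt_id' ζ).const_mul 2 |>.div_const 3 |>.const_sub 1).fun_sub
    ((hasDerivAt_pow 2 ζ).div_const 3)).congr_deriv (by push_cast; ring)

theorem radicand_jet_zero :
    deriv radicand 0 = -2 / 3 ∧ iteratedDeriv 2 radicand 0 = -2 / 3 ∧
      iteratedDeriv 3 radicand 0 = 0 := by
  have hderiv : deriv radicand = fun ζ => -(2 / 3) - 2 * ζ / 3 :=
    funext fun ζ => (hasDerivAt_radicand ζ).deriv
  simp [iteratedDeriv_succ', hderiv]
  norm_num

theorem analyticAt_sqrt_radicand : AnalyticAt ℂ (fun ζ => radicand ζ ^ (1 / 2 : ℂ)) 0 :=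
  (by unfold radicand; fun_prop : AnalyticAt ℂ radicand 0).cpow analyticAt_const
    (radicand_zero ▸ one_mem_slitPlane)

theorem sqrt_radicand_jet_zero :
    deriv (fun ζ => radicand ζ ^ (1 / 2 : ℂ)) 0 = -1 / 3 ∧
      iteratedDeriv 2 (fun ζ => radicand ζ ^ (1 / 2 : ℂ)) 0 = -4 / 9 ∧
      iteratedDeriv 3 (fun ζ => radicand ζ ^ (1 / 2 : ℂ)) 0 = -4 / 9 := by
  have hmem : radicand 0 ∈ slitPlane := radicand_zero ▸ one_mem_slitPlane
  have hsqrt : ContDiffAt ℂ 3 (· ^ (1 / 2 : ℂ)) (radicand 0) :=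
    (analyticAt_id.cpow analyticAt_const hmem).contDiffAt
  have hrad : ContDiffAt ℂ 3 radicand 0 := by unfold radicand; fun_prop
  have hsqrt_jet (k : ℕ) : iteratedDeriv k (· ^ (1 / 2 : ℂ)) (radicand 0) =
      ∏ i ∈ Finset.range k, (1 / 2 - i : ℂ) := by
    rw [iteratedDeriv_cpow_const _ _ hmem, radicand_zero, one_cpow, mul_one]
  obtain ⟨h1, h2, h3⟩ := radicand_jet_zero
  refine ⟨?_, ?_, ?_⟩
  · have := deriv_comp (0 : ℂ) (hsqrt.differentiableAt (by norm_num))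
      (hrad.differentiableAt (by norm_num))
    rw [Function.comp_def] at this
    rw [this, ← iteratedDeriv_one, hsqrt_jet, h1]
    norm_num
  · have := iteratedDeriv_comp_two (hsqrt.of_le (by norm_num)) (hrad.of_le (by norm_num))
    rw [Function.comp_def] at this
    rw [this, ← iteratedDeriv_one (f := (· ^ _)), hsqrt_jet, hsqrt_jet, h1, h2]
    simp [Finset.prod_range_succ]
    norm_num
  · have := iteratedDeriv_comp_three hsqrt hrad
    rw [Function.comp_def] at this
    rw [this, ← iteratedDeriv_one (f := (· ^ _)), hsqrt_jet, hsqrt_jet, hsqrt_jet, h1, h2, h3]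
    simp [Finset.prod_range_succ]
    norm_num

noncomputable def branchOmega (ζ : ℂ) : ℂ := -ζ / 2 + (3 / 2) * (radicand ζ ^ ((1 : ℂ) / 2) - 1)

theorem contDiffAt_branchOmega (n : WithTop ℕ∞) : ContDiffAt ℂ n branchOmega 0 := by
  have := analyticAt_sqrt_radicand.contDiffAt (n := n)
  unfold branchOmega
  fun_prop

theorem branchOmega_jet_zero :
    branchOmega 0 = 0 ∧ deriv branchOmega 0 = -1 ∧ iteratedDeriv 2 branchOmega 0 = -2 / 3 ∧
      iteratedDeriv 3 branchOmega 0 = -2 / 3 := by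
  have hsplit (k : ℕ) (hk : 0 < k) : iteratedDeriv k branchOmega 0 =
      -(if k = 1 then 1 else 0) / 2 +
        3 / 2 * iteratedDeriv k (fun ζ => radicand ζ ^ (1 / 2 : ℂ)) 0 := by
    have := analyticAt_sqrt_radicand.contDiffAt (n := k)
    unfold branchOmega
    simp only [sub_eq_neg_add (_ ^ _)]
    rw [iteratedDeriv_fun_add (by fun_prop) (by fun_prop), iteratedDeriv_const_mul_field,
      iteratedDeriv_const_add hk, iteratedDeriv_div_const, iteratedDeriv_fun_neg,
      iteratedDeriv_fun_id_zero]
  obtain ⟨h1, h2, h3⟩ := sqrt_radicand_jet_zero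
  refine ⟨by simp [branchOmega, radicand_zero], ?_, ?_, ?_⟩
  · rw [← iteratedDeriv_one, hsplit 1 one_pos, iteratedDeriv_one, h1]
    norm_num
  · rw [hsplit 2 two_pos, h2]
    norm_num
  · rw [hsplit 3 three_pos, h3]
    norm_num

/-- The coefficient of `ζ³` in the branch of `F_a` fixing `ζ = 0` equals
`((a−7)/(3(a−1)))²`, the square of the coefficient of `ζ²`. -/
theorem Fa_cubic_coefficient (a : ℂ) (ha : a ≠ 1) :
    let ω : ℂ → ℂ := fun ζ =>
      -ζ / 2 + (3 / 2) * ((1 - 2 * ζ / 3 - ζ ^ 2 / 3) ^ ((1 : ℂ) / 2) - 1)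
    let j : ℂ → ℂ := fun w => -w / (1 - 2 * w / (a - 1))
    iteratedDeriv 3 (fun ζ => j (ω ζ)) 0 / 6 = ((a - 7) / (3 * (a - 1))) ^ 2 := by
  intro ω j
  have hj : j = fun w => -w / (1 - 2 / (a - 1) * w) := by
    funext w
    simp only [j, mul_div_right_comm]
  obtain ⟨hω0, hω1, hω2, hω3⟩ := branchOmega_jet_zero
  have hjC : ContDiffAt ℂ 3 j (branchOmega 0) := by
    rw [hj, hω0]
    fun_prop (disch := simp)
  change iteratedDeriv 3 (j ∘ branchOmega) 0 / 6 = _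
  rw [iteratedDeriv_comp_three hjC (contDiffAt_branchOmega 3), hω0, hω1, hω2, hω3,
    ← iteratedDeriv_one, hj, iteratedDeriv_neg_div_one_sub_mul _ one_pos,
    iteratedDeriv_neg_div_one_sub_mul _ two_pos, iteratedDeriv_neg_div_one_sub_mul _ three_pos]
  have ha' : a - 1 ≠ 0 := sub_ne_zero.mpr ha
  norm_num [Nat.factorial]
  field_simp
  ring
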